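/- (Gram correspondence for the Nyström approximation.) Let B ∈ ℝ^{k×n}, set A := Bᵀ B, let j_1,…,j_r ∈ {1,…,n} be distinct indices, and assume the r×r matrix A(J,J) := E_Jᵀ A E_J is invertible. Define the matrix Π := B E_J A(J,J)⁻¹ E_Jᵀ Bᵀ ∈ ℝ^{k×k}. Then Π is a symmetric idempotent (the orthogonal projection onto the column span of B E_J), the Nyström residual satisfies A − A E_J A(J,J)⁻¹ E_Jᵀ A = Bᵀ (I_k − Π) B, and trace(A − A E_J A(J,J)⁻¹ E_Jᵀ A) = ‖(I_k − Π) B‖_F². In particular the Nyström residual is symmetric positive semi-definite and its trace (= nuclear norm) equals the squared Frobenius column-subset-selection error of B. -/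
import Mathlib


open Matrix BigOperators

/-- One step of the ARP recursion: project out the `i`-th row of `W`
(convention: leave `W` unchanged if that row is zero). -/
noncomputable def arpStep {n r : ℕ} (W : Matrix (Fin n) (Fin r) ℝ) (i : Fin n) :
    Matrix (Fin n) (Fin r) ℝ :=
  if W i = 0 then W
  else W * (1 - (∑ l, (W i l) ^ 2)⁻¹ • Matrix.of fun a b => W i a * W i b)

/-- The ARP iterates `V_k`. -/
noncomputable def arpIter {n r : ℕ} (V : Matrix (Fin n) (Fin r) ℝ) (j : Fin r → Fin n) :
    ℕ → Matrix (Fin n) (Fin r) ℝ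
  | 0 => V
  | k + 1 => if h : k < r then arpStep (arpIter V j k) (j ⟨k, h⟩) else arpIter V j k

/-- The ARP weight `w(j) = ∏_{k=1}^r ‖v_k‖²/(r-k+1)`. -/
noncomputable def arpWeight {n r : ℕ} (V : Matrix (Fin n) (Fin r) ℝ) (j : Fin r → Fin n) : ℝ :=
  ∏ k : Fin r, (∑ l, (arpIter V j k.val (j k) l) ^ 2) / ((r : ℝ) - (k.val : ℝ))

/-- The matrix `E_J` whose `k`-th column is the `j_k`-th standard basis vector of ℝⁿ. -/
def EJ {n k : ℕ} (j : Fin k → Fin n) : Matrix (Fin n) (Fin k) ℝ :=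
  Matrix.of fun i l => if i = j l then 1 else 0

/-- Squared Frobenius norm. -/
def frobSq {m n : ℕ} (A : Matrix (Fin m) (Fin n) ℝ) : ℝ := ∑ i, ∑ j, (A i j) ^ 2

lemma frobSq_eq_trace {m n : ℕ} (A : Matrix (Fin m) (Fin n) ℝ) :
    frobSq A = Matrix.trace (Aᵀ * A) := by
  simp [frobSq, Matrix.trace, Matrix.mul_apply, Matrix.diag, sq]
  exact Finset.sum_comm

/-- Gram correspondence for the Nyström approximation: with `A = BᵀB`
and `A(J,J)` invertible, `Π := B E_J A(J,J)⁻¹ E_Jᵀ Bᵀ` is a symmetric idempotent,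
the Nyström residual equals `Bᵀ(I − Π)B`, and its trace equals `‖(I − Π)B‖_F²`. -/

theorem gram_correspondence_nystrom {k n r : ℕ}
    (B : Matrix (Fin k) (Fin n) ℝ)
    (j : Fin r → Fin n) (hj : Function.Injective j)
    (hdet : IsUnit ((EJ j)ᵀ * (Bᵀ * B) * EJ j).det) :
    (B * EJ j * ((EJ j)ᵀ * (Bᵀ * B) * EJ j)⁻¹ * (EJ j)ᵀ * Bᵀ)ᵀ =
        B * EJ j * ((EJ j)ᵀ * (Bᵀ * B) * EJ j)⁻¹ * (EJ j)ᵀ * Bᵀ ∧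
      (B * EJ j * ((EJ j)ᵀ * (Bᵀ * B) * EJ j)⁻¹ * (EJ j)ᵀ * Bᵀ) *
          (B * EJ j * ((EJ j)ᵀ * (Bᵀ * B) * EJ j)⁻¹ * (EJ j)ᵀ * Bᵀ) =
        B * EJ j * ((EJ j)ᵀ * (Bᵀ * B) * EJ j)⁻¹ * (EJ j)ᵀ * Bᵀ ∧
      (Bᵀ * B) - (Bᵀ * B) * EJ j * ((EJ j)ᵀ * (Bᵀ * B) * EJ j)⁻¹ * ((EJ j)ᵀ * (Bᵀ * B)) =
        Bᵀ * (1 - B * EJ j * ((EJ j)ᵀ * (Bᵀ * B) * EJ j)⁻¹ * (EJ j)ᵀ * Bᵀ) * B ∧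
      Matrix.trace
          ((Bᵀ * B) - (Bᵀ * B) * EJ j * ((EJ j)ᵀ * (Bᵀ * B) * EJ j)⁻¹ * ((EJ j)ᵀ * (Bᵀ * B))) =
        frobSq ((1 - B * EJ j * ((EJ j)ᵀ * (Bᵀ * B) * EJ j)⁻¹ * (EJ j)ᵀ * Bᵀ) * B) := by
  set E := EJ j
  set M := Eᵀ * (Bᵀ * B) * E with hM
  have hMsymm : Mᵀ = M := by
    simp [hM, Matrix.transpose_mul, Matrix.mul_assoc]
  have hMinvT : (M⁻¹)ᵀ = M⁻¹ := by
    rw [Matrix.transpose_nonsing_inv, hMsymm]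
  set P := B * E * M⁻¹ * Eᵀ * Bᵀ with hP
  have hPsymm : Pᵀ = P := by
    simp only [hP, Matrix.transpose_mul, Matrix.transpose_transpose, hMinvT]
    simp [Matrix.mul_assoc]
  have hMM : M⁻¹ * M = 1 := Matrix.nonsing_inv_mul _ hdet
  have hPidem : P * P = P := by
    have h : P * P = B * E * (M⁻¹ * (Eᵀ * (Bᵀ * B) * E) * M⁻¹) * Eᵀ * Bᵀ := by
      simp only [hP, Matrix.mul_assoc]
    rw [h, ← hM, hMM, Matrix.one_mul]
  have hres : (Bᵀ * B) - (Bᵀ * B) * E * M⁻¹ * (Eᵀ * (Bᵀ * B)) = Bᵀ * (1 - P) * B := by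
    simp only [Matrix.mul_sub, Matrix.sub_mul, Matrix.mul_one, hP]
    simp [Matrix.mul_assoc]
  refine ⟨hPsymm, hPidem, hres, ?_⟩
  rw [hres, frobSq_eq_trace]
  have h2 : ((1 - P) * B)ᵀ * ((1 - P) * B) = Bᵀ * ((1 - P) * (1 - P)) * B := by
    simp only [Matrix.transpose_mul, Matrix.transpose_sub, Matrix.transpose_one, hPsymm]
    simp [Matrix.mul_assoc]
  have h3 : (1 - P) * (1 - P) = 1 - P := by
    simp only [Matrix.mul_sub, Matrix.sub_mul, Matrix.mul_one, Matrix.one_mul, hPidem]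
    abel
  rw [h2, h3]
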